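/- arXiv:2412.01073 — 11 statements merged into one kernel-verified Lean document; each statement's English description precedes it below -/
import Mathlib

section
/- Let N > 1 and α ≥ 1 be natural numbers with gcd(2α, N) = 1, let m < N be a natural number, let y : ZMod (N^2) satisfy y^(2αN) = 1, and let c := (1+N)^m · y^N in ZMod (N^2). Then c^(2α) = (1+N)^(2α·m) in ZMod (N^2); consequently, writing v for the canonical representative of c^(2α) in [0, N^2), one has v ≡ 1 (mod N) and, for any natural number u with 2α·u ≡ 1 (mod N), ((v − 1)/N)·u ≡ m (mod N). -/
lemma fastPai_aux_sq (N : ℕ) : ((N : ZMod (N^2)))^2 = 0 := by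
  have h : (N : ZMod (N^2)) * N = 0 := by
    have : ((N^2 : ℕ) : ZMod (N^2)) = 0 := ZMod.natCast_self (N^2)
    push_cast at this
    simpa [sq] using this
  exact (sq (N : ZMod (N^2))).trans h

lemma fastPai_aux_pow (N k : ℕ) :
    ((1 : ZMod (N^2)) + (N : ZMod (N^2)))^k = 1 + (k : ZMod (N^2)) * N := by
  induction k with
  | zero => simp
  | succ k ih =>
    rw [pow_succ ((1 : ZMod (N^2)) + (N : ZMod (N^2))) k, ih]
    push_cast
    ring_nf
    rw [fastPai_aux_sq]
    ring

lemma fastPai_aux_val (N k : ℕ) (hN : 1 < N) :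
    ((1 : ZMod (N^2)) + (k : ZMod (N^2)) * N).val = 1 + (k % N) * N := by
  have hcast : ((1 : ZMod (N^2)) + (k : ZMod (N^2)) * N)
      = ((1 + (k % N) * N : ℕ) : ZMod (N^2)) := by
    have hk : (k : ZMod (N^2)) * N = ((k % N : ℕ) : ZMod (N^2)) * N := by
      conv_lhs => rw [← Nat.mod_add_div k N]
      push_cast
      ring_nf
      rw [fastPai_aux_sq, zero_mul, add_zero]
    rw [hk]; push_cast; ring
  rw [hcast, ZMod.val_natCast, Nat.mod_eq_of_lt]
  have h1 : k % N ≤ N - 1 := Nat.le_sub_one_of_lt (Nat.mod_lt _ (by omega))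
  have h2 := Nat.mul_le_mul_right N h1
  have h3 : (N - 1) * N = N * N - N := by rw [Nat.sub_mul]; omega
  have hNN : N < N * N := by nlinarith
  rw [sq]
  omega

/-- Correctness of FastPaiTD decryption: for a ciphertext
`c = (1+N)^m · y^N` with `y^(2αN) = 1`, one has `c^(2α) = (1+N)^(2αm)`,
the canonical representative `v` of `c^(2α)` satisfies `v ≡ 1 (mod N)`,
and `((v−1)/N)·u ≡ m (mod N)` for any `u` with `2αu ≡ 1 (mod N)`. -/
theorem fastPaiTD_dec_correct (N α : ℕ) (hN : 1 < N) (hα : 1 ≤ α)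
    (hgcd : Nat.gcd (2 * α) N = 1)
    (m : ℕ) (hm : m < N)
    (y : ZMod (N^2)) (hy : y^(2 * α * N) = 1)
    (c : ZMod (N^2)) (hc : c = ((1 : ZMod (N^2)) + (N : ZMod (N^2)))^m * y^N)
    (u : ℕ) (hu : 2 * α * u ≡ 1 [MOD N]) :
    c^(2 * α) = ((1 : ZMod (N^2)) + (N : ZMod (N^2)))^(2 * α * m) ∧
    (c^(2 * α)).val ≡ 1 [MOD N] ∧
    (((c^(2 * α)).val - 1) / N) * u ≡ m [MOD N] := by
  have h1 : c^(2 * α) = ((1 : ZMod (N^2)) + (N : ZMod (N^2)))^(2 * α * m) := by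
    rw [hc, mul_pow, ← pow_mul, ← pow_mul]
    have : y ^ (N * (2 * α)) = 1 := by rw [mul_comm]; exact hy
    rw [this, mul_one, mul_comm m (2 * α)]
  have hval : (c^(2 * α)).val = 1 + ((2 * α * m) % N) * N := by
    rw [h1, fastPai_aux_pow, fastPai_aux_val N _ hN]
  refine ⟨h1, ?_, ?_⟩
  · rw [hval]
    have : (1 + ((2 * α * m) % N) * N) % N = 1 % N := by
      rw [Nat.add_mul_mod_self_right]
    exact this
  · rw [hval]
    have hdiv : (1 + ((2 * α * m) % N) * N - 1) / N = (2 * α * m) % N := by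
      simp [Nat.mul_div_cancel _ (show 0 < N by omega)]
    rw [hdiv]
    calc ((2 * α * m) % N) * u ≡ (2 * α * m) * u [MOD N] :=
          Nat.ModEq.mul_right u (Nat.mod_modEq _ _)
      _ = m * (2 * α * u) := by ring
      _ ≡ m * 1 [MOD N] := Nat.ModEq.mul_left m hu
      _ = m := by ring
end

section
/- Let N > 1 and α ≥ 1 be natural numbers, let m < N be a natural number, let y : ZMod (N^2) satisfy y^(2αN) = 1, and let c := (1+N)^m · y^N in ZMod (N^2). Let s be a natural number with s ≡ 0 (mod 2α) and s ≡ 1 (mod N). Then c^s = 1 + (m : ZMod (N^2))·N in ZMod (N^2); consequently the canonical representative of c^s in [0, N^2) equals 1 + m·N, so ((c^s mod N^2) − 1)/N = m. -/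
lemma fastPai_aux (N : ℕ) (t : ℕ) :
    ((1 : ZMod (N^2)) + (N : ZMod (N^2)))^t = 1 + (t : ZMod (N^2)) * N := by
  have hN2 : ((N : ZMod (N^2)) * N) = 0 := by
    have : ((N^2 : ℕ) : ZMod (N^2)) = 0 := ZMod.natCast_self _
    push_cast at this
    linear_combination this
  induction t with
  | zero => simp
  | succ t ih =>
    push_cast
    linear_combination (1 + (N : ZMod (N^2))) * ih + (t : ZMod (N^2)) * hN2

/-- Correctness of FastPaiTD partial/threshold decryption: if
`s ≡ 0 (mod 2α)` and `s ≡ 1 (mod N)`, then for a ciphertext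
`c = (1+N)^m · y^N` with `y^(2αN) = 1` one has `c^s = 1 + m·N` in `ZMod (N^2)`,
its canonical representative is exactly `1 + m·N`, and `((c^s mod N^2) − 1)/N = m`. -/
theorem fastPaiTD_tdec_correct (N α : ℕ) (hN : 1 < N) (hα : 1 ≤ α)
    (m : ℕ) (hm : m < N)
    (y : ZMod (N^2)) (hy : y^(2 * α * N) = 1)
    (c : ZMod (N^2)) (hc : c = ((1 : ZMod (N^2)) + (N : ZMod (N^2)))^m * y^N)
    (s : ℕ) (hs0 : s ≡ 0 [MOD 2 * α]) (hs1 : s ≡ 1 [MOD N]) :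
    c^s = 1 + (m : ZMod (N^2)) * (N : ZMod (N^2)) ∧
    (c^s).val = 1 + m * N ∧
    ((c^s).val - 1) / N = m := by
  have hN0 : 0 < N := by omega
  obtain ⟨k, hk⟩ : 2 * α ∣ s := (Nat.modEq_zero_iff_dvd).mp hs0
  have hsmod : s % N = 1 := by
    have := hs1.symm
    unfold Nat.ModEq at this
    rw [Nat.one_mod_eq_one.mpr (by omega)] at this
    omega
  have hN2cast : ((N : ZMod (N^2)) * N) = 0 := by
    have : ((N^2 : ℕ) : ZMod (N^2)) = 0 := ZMod.natCast_self _
    push_cast at this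
    linear_combination this
  have hys : (y ^ N) ^ s = 1 := by
    rw [← pow_mul, hk, show N * (2 * α * k) = (2 * α * N) * k by ring, pow_mul, hy,
      one_pow]
  have h1 : c ^ s = 1 + (m : ZMod (N^2)) * N := by
    rw [hc, mul_pow, hys, mul_one, ← pow_mul, fastPai_aux]
    congr 1
    have hdecomp : m * s = m + (m * (s / N)) * N := by
      have h : s = N * (s / N) + 1 := by
        conv_lhs => rw [← Nat.div_add_mod s N, hsmod]
      calc m * s = m * (N * (s / N) + 1) := by rw [← h]
        _ = m + (m * (s / N)) * N := by ring
    rw [hdecomp]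
    push_cast
    linear_combination (m : ZMod (N^2)) * ((s / N : ℕ) : ZMod (N^2)) * hN2cast
  have hlt : 1 + m * N < N^2 := by nlinarith
  have h2 : (c ^ s).val = 1 + m * N := by
    rw [h1]
    have h : (1 : ZMod (N^2)) + (m : ZMod (N^2)) * N = ((1 + m * N : ℕ) : ZMod (N^2)) := by
      push_cast; ring
    rw [h, ZMod.val_natCast_of_lt hlt]
  refine ⟨h1, h2, ?_⟩
  rw [h2]
  simp [Nat.mul_div_cancel _ hN0]
end

section
/- Let N > 1 and α ≥ 1 be natural numbers, let m < N and k be natural numbers, let y : ZMod (N^2) satisfy y^(2αN) = 1, and let c := (1+N)^m · y^N in ZMod (N^2). Then (c^k)^(2α) = (1+N)^(2α·k·m) in ZMod (N^2); in particular c^k is a FastPaiTD ciphertext whose decryption is (k·m) mod N. -/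
lemma one_add_sq_zero_pow {R : Type*} [CommRing R] (x : R) (hx : x^2 = 0) (n : ℕ) :
    (1 + x)^n = 1 + n * x := by
  induction n with
  | zero => simp
  | succ n ih =>
      rw [pow_succ, ih]
      ring_nf
      rw [hx]
      push_cast
      ring

/-- Scalar-multiplication homomorphism of FastPaiTD: for a ciphertext
`c = (1+N)^m · y^N` and a scalar `k`, one has `(c^k)^(2α) = (1+N)^(2αkm)`;
in particular `c^k` is a FastPaiTD ciphertext of `(k·m) mod N`. -/
theorem fastPaiTD_scalar_hom (N α : ℕ) (hN : 1 < N) (hα : 1 ≤ α)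
    (m k : ℕ) (hm : m < N)
    (y : ZMod (N^2)) (hy : y^(2 * α * N) = 1)
    (c : ZMod (N^2)) (hc : c = ((1 : ZMod (N^2)) + (N : ZMod (N^2)))^m * y^N) :
    (c^k)^(2 * α)
      = ((1 : ZMod (N^2)) + (N : ZMod (N^2)))^(2 * α * (k * m)) ∧
    ∃ y' : ZMod (N^2), y'^(2 * α * N) = 1 ∧
      c^k = ((1 : ZMod (N^2)) + (N : ZMod (N^2)))^((k * m) % N) * y'^N := by
  set x : ZMod (N^2) := (N : ZMod (N^2)) with hxdef
  have hx2 : x^2 = 0 := by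
    rw [hxdef, ← Nat.cast_pow, ZMod.natCast_self]
  have hxN : (1 + x)^N = 1 := by
    rw [one_add_sq_zero_pow x hx2, hxdef, ← sq, hx2, add_zero]
  have hck : c^k = (1 + x)^(k * m) * y^(N * k) := by
    rw [hc, mul_pow, ← pow_mul, ← pow_mul, mul_comm m k]
  constructor
  · rw [hck, mul_pow, ← pow_mul, ← pow_mul]
    have : y ^ (N * k * (2 * α)) = (y ^ (2 * α * N))^k := by
      rw [← pow_mul]; ring_nf
    rw [this, hy, one_pow, mul_one]
    ring_nf
  · refine ⟨(1 + x)^(k * m / N) * y^k, ?_, ?_⟩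
    · rw [mul_pow, ← pow_mul, ← pow_mul]
      have h1 : (1 + x) ^ (k * m / N * (2 * α * N)) = ((1 + x)^N)^(k * m / N * (2 * α)) := by
        rw [← pow_mul]; ring_nf
      have h2 : y ^ (k * (2 * α * N)) = (y ^ (2 * α * N))^k := by
        rw [← pow_mul]; ring_nf
      rw [h1, h2, hxN, hy, one_pow, one_pow, mul_one]
    · rw [hck, mul_pow, ← pow_mul, ← pow_mul]
      have h3 : (1+x)^(k*m/N*N) = 1 := by rw [pow_mul', hxN, one_pow]
      rw [h3, one_mul, mul_comm k N]
      congr 1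
      conv_lhs => rw [← Nat.div_add_mod (k*m) N]
      rw [pow_add, pow_mul, hxN, one_pow, one_mul]
end

section
/- Let N > 1 and α ≥ 1 be natural numbers, let m₁, m₂ < N and r be natural numbers, let y, g : ZMod (N^2) satisfy y^(2αN) = 1 and g^(2αN) = 1, and let c₂ := (1+N)^(m₂) · y^N, viewed as a unit of ZMod (N^2). Then, in the unit group of ZMod (N^2), (c₂^(m₁+r) · c₂^(−r) · g^N)^(2α) = ((1+N) : (ZMod (N^2))ˣ)^(2α·m₁·m₂); in particular the ciphertext ⟦m₂⟧^(m₁+r) · ⟦−r·m₂⟧ · Enc(pk,0) computed by the TEE in protocol F_mul decrypts to (m₁·m₂) mod N. -/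
/-- Correctness of the secure multiplication protocol `F_mul`: in the unit
group of `ZMod (N^2)`, with `c₂ = w^(m₂)·y^N` a ciphertext of `m₂`
(where `w` is the unit `1 + N`), one has
`(c₂^(m₁+r) · c₂^(−r) · g^N)^(2α) = w^(2α·m₁·m₂)`, so the ciphertext
computed by the TEE decrypts to `(m₁·m₂) mod N`. -/
theorem fastPaiTD_mul_correct (N α : ℕ) (hN : 1 < N) (hα : 1 ≤ α)
    (m₁ m₂ r : ℕ) (hm₁ : m₁ < N) (hm₂ : m₂ < N)
    (w y g c₂ : (ZMod (N^2))ˣ)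
    (hw : (w : ZMod (N^2)) = (1 : ZMod (N^2)) + (N : ZMod (N^2)))
    (hy : y^(2 * α * N) = 1) (hg : g^(2 * α * N) = 1)
    (hc₂ : c₂ = w^m₂ * y^N) :
    (c₂^((m₁ : ℤ) + (r : ℤ)) * c₂^(-(r : ℤ)) * g^N)^(2 * α)
      = w^(2 * α * m₁ * m₂) := by
  have h1 : c₂^((m₁ : ℤ) + (r : ℤ)) * c₂^(-(r : ℤ)) = c₂^m₁ := by
    rw [← zpow_add]
    norm_num
  rw [h1, hc₂, mul_pow, ← pow_mul, mul_pow, ← pow_mul, ← pow_mul, ← pow_mul]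
  have hy' : y ^ (N * (m₁ * (2 * α))) = 1 := by
    have : N * (m₁ * (2 * α)) = 2 * α * N * m₁ := by ring
    rw [this, pow_mul, hy, one_pow]
  have hg' : g ^ (N * (2 * α)) = 1 := by
    have : N * (2 * α) = 2 * α * N := by ring
    rw [this, hg]
  rw [hy', hg', mul_one, mul_one]
  ring_nf
end

section
/- Let N, r₁, r₂, m₁, m₂ be integers with r₁ > 0, 2·r₂ < N, and 2·(r₁ + r₂) > N. Then 2·(r₁·(m₁ − m₂ + 1) + r₂) > N if and only if m₁ ≥ m₂; and 2·(r₁·(m₁ − m₂ + 1) + r₂) < N if and only if m₁ < m₂. -/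
/-- Correctness of Case 1 (π = 0) in the secure comparison protocol:
with `r₁ > 0`, `r₂ < N/2` and `r₁ + r₂ > N/2`, the masked value
`d = r₁·(m₁ − m₂ + 1) + r₂` satisfies `d > N/2` iff `m₁ ≥ m₂`, and
`d < N/2` iff `m₁ < m₂`. -/
theorem cmp_case_pi0 (N r₁ r₂ m₁ m₂ : ℤ)
    (hr₁ : 0 < r₁) (hr₂ : 2 * r₂ < N) (hsum : N < 2 * (r₁ + r₂)) :
    (N < 2 * (r₁ * (m₁ - m₂ + 1) + r₂) ↔ m₂ ≤ m₁) ∧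
    (2 * (r₁ * (m₁ - m₂ + 1) + r₂) < N ↔ m₁ < m₂) := by
  have hge : m₂ ≤ m₁ → N < 2 * (r₁ * (m₁ - m₂ + 1) + r₂) := by
    intro h
    have h1 : (1 : ℤ) ≤ m₁ - m₂ + 1 := by omega
    nlinarith
  have hlt : m₁ < m₂ → 2 * (r₁ * (m₁ - m₂ + 1) + r₂) < N := by
    intro h
    have h1 : m₁ - m₂ + 1 ≤ 0 := by omega
    nlinarith
  constructor
  · constructor
    · intro hd; by_contra h; exact absurd (hlt (by omega)) (by omega)
    · exact hge
  · constructor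
    · intro hd; by_contra h; exact absurd (hge (by omega)) (by omega)
    · exact hlt
end

section
/- Let N, r₁, r₂, m₁, m₂ be integers with r₁ > 0, 2·r₂ < N, and 2·(r₁ + r₂) > N. Then 2·(r₁·(m₂ − m₁) + r₂) > N if and only if m₁ < m₂; and 2·(r₁·(m₂ − m₁) + r₂) < N if and only if m₁ ≥ m₂. -/
/-- Correctness of Case 2 (π = 1) in the secure comparison protocol:
with `r₁ > 0`, `r₂ < N/2` and `r₁ + r₂ > N/2`, the masked value
`d = r₁·(m₂ − m₁) + r₂` satisfies `d > N/2` iff `m₁ < m₂`, and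
`d < N/2` iff `m₁ ≥ m₂`. -/
theorem cmp_case_pi1 (N r₁ r₂ m₁ m₂ : ℤ)
    (hr₁ : 0 < r₁) (hr₂ : 2 * r₂ < N) (hsum : N < 2 * (r₁ + r₂)) :
    (N < 2 * (r₁ * (m₂ - m₁) + r₂) ↔ m₁ < m₂) ∧
    (2 * (r₁ * (m₂ - m₁) + r₂) < N ↔ m₂ ≤ m₁) := by
  constructor
  · constructor
    · intro h
      by_contra hm
      push_neg at hm
      have : m₂ - m₁ ≤ 0 := by linarith
      nlinarith [mul_nonpos_of_nonneg_of_nonpos hr₁.le this]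
    · intro h
      have h1 : 1 ≤ m₂ - m₁ := by linarith
      nlinarith
  · constructor
    · intro h
      by_contra hm
      push_neg at hm
      have h1 : 1 ≤ m₂ - m₁ := by linarith
      nlinarith
    · intro h
      have : m₂ - m₁ ≤ 0 := by linarith
      nlinarith [mul_nonpos_of_nonneg_of_nonpos hr₁.le this]
end

section
/- Let N, r₁, r₂, m₁, m₂ be integers with r₁ > 0, 2·r₂ < N, and 2·(r₁ + r₂) > N, and let π ∈ {0, 1} (as an integer). Define d := r₁·(m₁ − m₂ + 1) + r₂ if π = 0 and d := r₁·(m₂ − m₁) + r₂ if π = 1, and define μ₀ := 0 if 2·d > N and μ₀ := 1 otherwise. Then μ₀ + (1 − 2·μ₀)·π = 0 if m₁ ≥ m₂, and μ₀ + (1 − 2·μ₀)·π = 1 if m₁ < m₂. -/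
/-- Full correctness of the secure comparison protocol `F_cmp` (Algorithm 2):
with the masked value `d` and indicator `μ₀` as defined, the output
`μ₀ + (1 − 2μ₀)·π` equals `0` when `m₁ ≥ m₂` and `1` when `m₁ < m₂`. -/
theorem cmp_correct (N r₁ r₂ m₁ m₂ π d μ₀ : ℤ)
    (hr₁ : 0 < r₁) (hr₂ : 2 * r₂ < N) (hsum : N < 2 * (r₁ + r₂))
    (hπ : π = 0 ∨ π = 1)
    (hd : d = if π = 0 then r₁ * (m₁ - m₂ + 1) + r₂ else r₁ * (m₂ - m₁) + r₂)
    (hμ₀ : μ₀ = if N < 2 * d then 0 else 1) :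
    (m₂ ≤ m₁ → μ₀ + (1 - 2 * μ₀) * π = 0) ∧
    (m₁ < m₂ → μ₀ + (1 - 2 * μ₀) * π = 1) := by
  rcases hπ with hπ | hπ <;> subst hπ <;> simp only [eq_self_iff_true, if_true, one_ne_zero, if_false] at hd <;>
    constructor <;> intro h
  · have h1 : N < 2 * d := by nlinarith
    rw [hμ₀, if_pos h1]; ring
  · have h1 : ¬ N < 2 * d := by push_neg; nlinarith
    rw [hμ₀, if_neg h1]; ring
  · have h1 : ¬ N < 2 * d := by push_neg; nlinarith
    rw [hμ₀, if_neg h1]; ring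
  · have h1 : N < 2 * d := by nlinarith
    rw [hμ₀, if_pos h1]; ring
end

section
/- Let N, m₁, m₂ be integers, let r₁, r₂, r₁', r₂' be integers with r₁ > 0, 2·r₂ < N, 2·(r₁ + r₂) > N, r₁' > 0, 2·r₂' < N, 2·(r₁' + r₂') > N, and let π₁, π₂ ∈ {0, 1} (as integers). Define d₁ := r₁·(m₁ − m₂ + 1) + r₂ if π₁ = 0 and d₁ := r₁·(m₂ − m₁) + r₂ if π₁ = 1; define d₂ := r₁'·(m₂ − m₁ + 1) + r₂' if π₂ = 0 and d₂ := r₁'·(m₁ − m₂) + r₂' if π₂ = 1. Define μ₀ := 0 if 2·d₁ > N and μ₀ := 1 otherwise, and μ₀' := 0 if 2·d₂ > N and μ₀' := 1 otherwise. Then μ₀ + (1 − 2·μ₀)·π₁ + μ₀' + (1 − 2·μ₀')·π₂ = 0 if m₁ = m₂, and this quantity equals 1 if m₁ ≠ m₂. -/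
set_option maxHeartbeats 2000000 in
/-- Full correctness of the secure equality protocol `F_eql` (Algorithm 3):
with the masked values `d₁`, `d₂` and indicators `μ₀`, `μ₀'` as defined, the
output `μ₀ + (1 − 2μ₀)·π₁ + μ₀' + (1 − 2μ₀')·π₂` equals `0` when `m₁ = m₂` and
`1` when `m₁ ≠ m₂`. -/
theorem eql_correct (N m₁ m₂ r₁ r₂ r₁' r₂' π₁ π₂ d₁ d₂ μ₀ μ₀' : ℤ)
    (hr₁ : 0 < r₁) (hr₂ : 2 * r₂ < N) (hsum : N < 2 * (r₁ + r₂))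
    (hr₁' : 0 < r₁') (hr₂' : 2 * r₂' < N) (hsum' : N < 2 * (r₁' + r₂'))
    (hπ₁ : π₁ = 0 ∨ π₁ = 1) (hπ₂ : π₂ = 0 ∨ π₂ = 1)
    (hd₁ : d₁ = if π₁ = 0 then r₁ * (m₁ - m₂ + 1) + r₂ else r₁ * (m₂ - m₁) + r₂)
    (hd₂ : d₂ = if π₂ = 0 then r₁' * (m₂ - m₁ + 1) + r₂' else r₁' * (m₁ - m₂) + r₂')
    (hμ₀ : μ₀ = if N < 2 * d₁ then 0 else 1)
    (hμ₀' : μ₀' = if N < 2 * d₂ then 0 else 1) :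
    (m₁ = m₂ → μ₀ + (1 - 2 * μ₀) * π₁ + μ₀' + (1 - 2 * μ₀') * π₂ = 0) ∧
    (m₁ ≠ m₂ → μ₀ + (1 - 2 * μ₀) * π₁ + μ₀' + (1 - 2 * μ₀') * π₂ = 1) := by
  rcases hπ₁ with h1 | h1 <;> rcases hπ₂ with h2 | h2 <;>
    subst h1 h2 hd₁ hd₂ hμ₀ hμ₀' <;>
    constructor <;> intro hm <;>
    simp only [if_pos rfl, if_neg one_ne_zero] <;>
    split_ifs <;>
    first
      | ring1
      | (exfalso
         rcases lt_trichotomy m₁ m₂ with h | h | h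
         · first
             | omega
             | nlinarith [mul_le_mul_of_nonneg_left (show m₁ - m₂ + 1 ≤ (0:ℤ) by omega) hr₁.le,
                 mul_le_mul_of_nonneg_left (show m₁ - m₂ + 1 ≤ (0:ℤ) by omega) hr₁'.le,
                 mul_le_mul_of_nonneg_left (show m₁ - m₂ ≤ (0:ℤ) by omega) hr₁.le,
                 mul_le_mul_of_nonneg_left (show m₁ - m₂ ≤ (0:ℤ) by omega) hr₁'.le,
                 mul_le_mul_of_nonneg_left (show (1:ℤ) ≤ m₂ - m₁ by omega) hr₁.le,
                 mul_le_mul_of_nonneg_left (show (1:ℤ) ≤ m₂ - m₁ by omega) hr₁'.le,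
                 mul_le_mul_of_nonneg_left (show (1:ℤ) ≤ m₂ - m₁ + 1 by omega) hr₁.le,
                 mul_le_mul_of_nonneg_left (show (1:ℤ) ≤ m₂ - m₁ + 1 by omega) hr₁'.le]
         · subst h
           omega
         · first
             | omega
             | nlinarith [mul_le_mul_of_nonneg_left (show m₂ - m₁ + 1 ≤ (0:ℤ) by omega) hr₁.le,
                 mul_le_mul_of_nonneg_left (show m₂ - m₁ + 1 ≤ (0:ℤ) by omega) hr₁'.le,
                 mul_le_mul_of_nonneg_left (show m₂ - m₁ ≤ (0:ℤ) by omega) hr₁.le,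
                 mul_le_mul_of_nonneg_left (show m₂ - m₁ ≤ (0:ℤ) by omega) hr₁'.le,
                 mul_le_mul_of_nonneg_left (show (1:ℤ) ≤ m₁ - m₂ by omega) hr₁.le,
                 mul_le_mul_of_nonneg_left (show (1:ℤ) ≤ m₁ - m₂ by omega) hr₁'.le,
                 mul_le_mul_of_nonneg_left (show (1:ℤ) ≤ m₁ - m₂ + 1 by omega) hr₁.le,
                 mul_le_mul_of_nonneg_left (show (1:ℤ) ≤ m₁ - m₂ + 1 by omega) hr₁'.le])
end

section
/- Let N, m₁ be integers, let r₁, r₂ be integers with r₁ > 0, 2·r₂ < N, and 2·(r₁ + r₂) > N, and let π ∈ {0, 1} (as an integer). Define d := r₁·(m₁ + 1) + r₂ if π = 0 and d := r₁·(−m₁) + r₂ if π = 1, and define μ₀ := 0 if 2·d > N and μ₀ := 1 otherwise. Then (1 − 2·μ₀)·m₁ + (4·μ₀ − 2)·π·m₁ = |m₁|. -/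
/-- Full correctness of the secure absolute-value protocol `F_abs`
(Algorithm 4): with the masked value `d` and indicator `μ₀` as defined, the
output `(1 − 2μ₀)·m₁ + (4μ₀ − 2)·π·m₁` equals `|m₁|`. -/
theorem abs_correct (N m₁ r₁ r₂ π d μ₀ : ℤ)
    (hr₁ : 0 < r₁) (hr₂ : 2 * r₂ < N) (hsum : N < 2 * (r₁ + r₂))
    (hπ : π = 0 ∨ π = 1)
    (hd : d = if π = 0 then r₁ * (m₁ + 1) + r₂ else r₁ * (-m₁) + r₂)
    (hμ₀ : μ₀ = if N < 2 * d then 0 else 1) :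
    (1 - 2 * μ₀) * m₁ + (4 * μ₀ - 2) * π * m₁ = |m₁| := by
  rcases hπ with hπ | hπ <;> subst hπ <;> simp at hd <;>
  rcases le_or_gt 0 m₁ with hm | hm
  · have h2d : N < 2 * d := by nlinarith
    rw [if_pos h2d] at hμ₀
    rw [abs_of_nonneg hm, hμ₀]; ring
  · have h2d : ¬ N < 2 * d := by push_neg; nlinarith
    rw [if_neg h2d] at hμ₀
    rw [abs_of_neg hm, hμ₀]; ring
  · have h2d : ¬ N < 2 * d := by push_neg; nlinarith
    rw [if_neg h2d] at hμ₀
    rw [abs_of_nonneg hm, hμ₀]; ring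
  · have h2d : N < 2 * d := by nlinarith
    rw [if_pos h2d] at hμ₀
    rw [abs_of_neg hm, hμ₀]; ring
end

section
/- Let N, m₁, m₂, m₃ be integers, let r₁, r₂, r₁', r₂' be integers with r₁ > 0, 2·r₂ < N, 2·(r₁ + r₂) > N, r₁' > 0, 2·r₂' < N, 2·(r₁' + r₂') > N, and let π₁, π₂ ∈ {0, 1} (as integers). Define d₁ := r₁·m₁ + r₂ if π₁ = 0 and d₁ := −r₁·m₁ + r₁ + r₂ if π₁ = 1; define d₂ := −r₁'·m₁ + 2·r₁' + r₂' if π₂ = 0 and d₂ := r₁'·m₁ + r₂' − r₁' if π₂ = 1. Define μ₀ := 0 if 2·d₁ > N and μ₀ := 1 otherwise, and μ₀' := 0 if 2·d₂ > N and μ₀' := 1 otherwise. Then m₂ + ((μ₀ + μ₀') + (1 − 2·μ₀)·π₁ + (1 − 2·μ₀')·π₂)·(m₃ − m₂) equals m₂ if m₁ = 1, and equals m₃ if m₁ ≠ 1. -/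
/-- Full correctness of the secure ternary conditional protocol `F_trn`
(Algorithm 5): with the masked values `d₁`, `d₂` and indicators `μ₀`, `μ₀'`
as defined, the output
`m₂ + ((μ₀ + μ₀') + (1 − 2μ₀)·π₁ + (1 − 2μ₀')·π₂)·(m₃ − m₂)`
equals `m₂` when `m₁ = 1` and `m₃` when `m₁ ≠ 1`. -/
theorem trn_correct (N m₁ m₂ m₃ r₁ r₂ r₁' r₂' π₁ π₂ d₁ d₂ μ₀ μ₀' : ℤ)
    (hr₁ : 0 < r₁) (hr₂ : 2 * r₂ < N) (hsum : N < 2 * (r₁ + r₂))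
    (hr₁' : 0 < r₁') (hr₂' : 2 * r₂' < N) (hsum' : N < 2 * (r₁' + r₂'))
    (hπ₁ : π₁ = 0 ∨ π₁ = 1) (hπ₂ : π₂ = 0 ∨ π₂ = 1)
    (hd₁ : d₁ = if π₁ = 0 then r₁ * m₁ + r₂ else -r₁ * m₁ + r₁ + r₂)
    (hd₂ : d₂ = if π₂ = 0 then -r₁' * m₁ + 2 * r₁' + r₂' else r₁' * m₁ + r₂' - r₁')
    (hμ₀ : μ₀ = if N < 2 * d₁ then 0 else 1)
    (hμ₀' : μ₀' = if N < 2 * d₂ then 0 else 1) :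
    (m₁ = 1 →
      m₂ + ((μ₀ + μ₀') + (1 - 2 * μ₀) * π₁ + (1 - 2 * μ₀') * π₂) * (m₃ - m₂) = m₂) ∧
    (m₁ ≠ 1 →
      m₂ + ((μ₀ + μ₀') + (1 - 2 * μ₀) * π₁ + (1 - 2 * μ₀') * π₂) * (m₃ - m₂) = m₃) := by
  subst hd₁ hd₂ hμ₀ hμ₀'
  rcases hπ₁ with rfl | rfl <;> rcases hπ₂ with rfl | rfl <;>
    simp only [if_pos rfl, if_neg one_ne_zero] <;>
    refine ⟨fun hm => ?_, fun hm => ?_⟩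
  all_goals try (subst hm; split_ifs <;> first | ring1 | linarith)
  all_goals (
    rcases (show m₁ ≤ 0 ∨ 2 ≤ m₁ by omega) with hm1 | hm1
    · have A1 : r₁ * m₁ ≤ 0 := mul_nonpos_of_nonneg_of_nonpos hr₁.le hm1
      have A2 : r₁' * m₁ ≤ 0 := mul_nonpos_of_nonneg_of_nonpos hr₁'.le hm1
      split_ifs <;> first | ring1 | linarith
    · have A1 : 2 * r₁ ≤ r₁ * m₁ := by nlinarith
      have A2 : 2 * r₁' ≤ r₁' * m₁ := by nlinarith
      split_ifs <;> first | ring1 | linarith)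
end

section
/- Let σ be a natural number and let m₀, m₁ be integers with |m₁ − m₀| ≤ 2^σ. Then the symmetric difference of the finite sets of integers Ico m₀ (m₀ + 2^σ) and Ico m₁ (m₁ + 2^σ) has cardinality 2·|m₁ − m₀|. In particular, if ℓ is a natural number with −2^ℓ < m₀ < 2^ℓ, −2^ℓ < m₁ < 2^ℓ, and 2^(ℓ+1) ≤ 2^σ, then this cardinality is at most 2^(ℓ+2); hence the statistical distance between the uniform distribution of m₀ + r and that of m₁ + r, for r uniform on [0, 2^σ), is at most 2^(ℓ+1)/2^σ. -/
/-- Quantitative core of Lemma 2 (statistical security of the one-time mask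
`m ↦ m + r` for `r` uniform on `[0, 2^σ)`): the symmetric difference of the
supports `[m₀, m₀ + 2^σ)` and `[m₁, m₁ + 2^σ)` has exactly `2·|m₁ − m₀|`
elements; if moreover `m₀, m₁ ∈ (−2^ℓ, 2^ℓ)` and `2^(ℓ+1) ≤ 2^σ`, this
cardinality is at most `2^(ℓ+2)`, hence the statistical distance between the
two uniform distributions is at most `2^(ℓ+1)/2^σ`. -/
theorem one_time_mask_statistical (σ : ℕ) (m₀ m₁ : ℤ)
    (h : |m₁ - m₀| ≤ 2^σ) :
    (symmDiff (Finset.Ico m₀ (m₀ + 2^σ)) (Finset.Ico m₁ (m₁ + 2^σ))).card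
      = 2 * (m₁ - m₀).natAbs ∧
    ∀ ℓ : ℕ, -2^ℓ < m₀ → m₀ < 2^ℓ → -2^ℓ < m₁ → m₁ < 2^ℓ →
      (2:ℤ)^(ℓ+1) ≤ 2^σ →
      (symmDiff (Finset.Ico m₀ (m₀ + 2^σ)) (Finset.Ico m₁ (m₁ + 2^σ))).card ≤ 2^(ℓ+2) ∧
      ((symmDiff (Finset.Ico m₀ (m₀ + 2^σ)) (Finset.Ico m₁ (m₁ + 2^σ))).card : ℚ)
          / (2 * 2^σ) ≤ 2^(ℓ+1) / 2^σ := by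
  set A := Finset.Ico m₀ (m₀ + 2^σ) with hA
  set B := Finset.Ico m₁ (m₁ + 2^σ) with hB
  set d : ℕ := (m₁ - m₀).natAbs with hdd
  have hcast : ((2:ℤ)^σ) = ((2^σ : ℕ) : ℤ) := by push_cast; ring
  have hdZ : ((d : ℤ)) = |m₁ - m₀| := Int.natCast_natAbs _
  have hdle : (d : ℤ) ≤ 2^σ := hdZ ▸ h
  have hdn : d ≤ 2^σ := by rw [hcast] at hdle; exact_mod_cast hdle
  have hAcard : A.card = 2^σ := by
    rw [hA, Int.card_Ico, add_sub_cancel_left, hcast, Int.toNat_natCast]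
  have hBcard : B.card = 2^σ := by
    rw [hB, Int.card_Ico, add_sub_cancel_left, hcast, Int.toNat_natCast]
  have hinter : (A ∩ B).card = 2^σ - d := by
    rw [hA, hB, Finset.Ico_inter_Ico, Int.card_Ico]
    have heq : min (m₀ + 2^σ) (m₁ + 2^σ) - max m₀ m₁ = 2^σ - d := by
      rcases le_total m₀ m₁ with h01 | h01
      · rw [max_eq_right h01, min_eq_left (by linarith)]
        have : |m₁ - m₀| = m₁ - m₀ := abs_of_nonneg (by linarith)
        rw [hdZ, this]; ring
      · rw [max_eq_left h01, min_eq_right (by linarith)]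
        have : |m₁ - m₀| = -(m₁ - m₀) := abs_of_nonpos (by linarith)
        rw [hdZ, this]; ring
    rw [heq, hcast, show ((2^σ:ℕ):ℤ) - (d:ℤ) = ((2^σ - d : ℕ) : ℤ) by omega,
      Int.toNat_natCast]
  have hsymm : (symmDiff A B).card = 2 * d := by
    rw [symmDiff_def, Finset.sup_eq_union,
      Finset.card_union_of_disjoint disjoint_sdiff_sdiff]
    have h1 := Finset.card_sdiff_add_card_inter A B
    have h2 := Finset.card_sdiff_add_card_inter B A
    rw [Finset.inter_comm] at h2
    omega
  refine ⟨hsymm, fun ℓ hm0l hm0r hm1l hm1r hls => ?_⟩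
  have hdlt : (d : ℤ) < 2^(ℓ+1) := by
    rw [hdZ]
    calc |m₁ - m₀| < 2^ℓ + 2^ℓ := abs_sub_lt_iff.mpr ⟨by linarith, by linarith⟩
      _ = 2^(ℓ+1) := by ring
  have hdl : d ≤ 2^(ℓ+1) := by
    rw [show ((2:ℤ)^(ℓ+1)) = ((2^(ℓ+1) : ℕ) : ℤ) by push_cast; ring] at hdlt
    exact_mod_cast hdlt.le
  have hcle : (symmDiff A B).card ≤ 2^(ℓ+2) := by
    rw [hsymm]
    calc 2 * d ≤ 2 * 2^(ℓ+1) := by omega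
      _ = 2^(ℓ+2) := by ring
  refine ⟨hcle, ?_⟩
  rw [div_le_div_iff₀ (by positivity) (by positivity)]
  have hcq : ((symmDiff A B).card : ℚ) ≤ 2^(ℓ+2) := by exact_mod_cast hcle
  calc ((symmDiff A B).card : ℚ) * 2^σ ≤ 2^(ℓ+2) * 2^σ :=
        mul_le_mul_of_nonneg_right hcq (by positivity)
    _ = 2^(ℓ+1) * (2 * 2^σ) := by ring
end
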